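/- arXiv:1906.03807 — 2 statements merged into one kernel-verified Lean document; each statement's English description precedes it below -/
import Mathlib

section
/- Let Θ ∈ ℝ^{d_1×⋯×d_K} admit two block decompositions Θ = C ×₁ M_1 ×₂ ⋯ ×_K M_K = C' ×₁ M'_1 ×₂ ⋯ ×_K M'_K, where C, C' ∈ ℝ^{R_1×⋯×R_K} are both irreducible core tensors and M_k, M'_k ∈ {0,1}^{d_k×R_k} are membership matrices for each k ∈ [K]. Then for every k ∈ [K], the matrices M_k and M'_k induce the same partition of [d_k]; that is, M'_k = M_k P_k for some R_k×R_k permutation matrix P_k. Consequently, in the Gaussian and Bernoulli tensor block models the membership matrices are identifiable up to permutations of cluster labels. -/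
open scoped BigOperators

/-- A membership matrix: entries in `{0,1}`, every row has exactly one `1`,
and every column is nonzero. -/
def IsMembership {d R : ℕ} (M : Matrix (Fin d) (Fin R) ℝ) : Prop :=
  (∀ i r, M i r = 0 ∨ M i r = 1) ∧ (∀ i, ∃! r, M i r = 1) ∧ (∀ r, ∃ i, M i r = 1)

/-- Multilinear product `C ×₁ M₁ ×₂ ⋯ ×_K M_K`, with entries
`∑_{r₁,…,r_K} c_{r₁,…,r_K} (M₁)_{i₁ r₁} ⋯ (M_K)_{i_K r_K}`. -/
def tmul {K : ℕ} {d R : Fin K → ℕ} (C : (∀ k, Fin (R k)) → ℝ)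
    (M : ∀ k, Matrix (Fin (d k)) (Fin (R k)) ℝ) : (∀ k, Fin (d k)) → ℝ :=
  fun i => ∑ r : ∀ k, Fin (R k), C r * ∏ k, M k (i k) (r k)

/-- A core tensor is irreducible if for every mode `k`, no two of its
order-(K-1) mode-`k` slices are identical. -/
def IrreducibleCore {K : ℕ} {R : Fin K → ℕ} (C : (∀ k, Fin (R k)) → ℝ) : Prop :=
  ∀ k : Fin K, ∀ r r' : Fin (R k), r ≠ r' →
    ∃ s : ∀ j, Fin (R j),
      C (Function.update s k r) ≠ C (Function.update s k r')

/-- If `z` records the unique `1` in each row of the membership matrices `M k`,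
then the multilinear product is the blockwise-constant tensor `i ↦ C (z ∘ i)`. -/
lemma tmul_eq_assign {K : ℕ} {d R : Fin K → ℕ} (C : (∀ k, Fin (R k)) → ℝ)
    (M : ∀ k, Matrix (Fin (d k)) (Fin (R k)) ℝ)
    (z : ∀ k, Fin (d k) → Fin (R k))
    (h01 : ∀ k i r, M k i r = 0 ∨ M k i r = 1)
    (hz : ∀ k i r, M k i r = 1 ↔ r = z k i)
    (i : ∀ k, Fin (d k)) :
    tmul C M i = C (fun k => z k (i k)) := by
  unfold tmul
  rw [Finset.sum_eq_single (fun k => z k (i k))]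
  · have h1 : (∏ k, M k (i k) (z k (i k))) = 1 :=
      Finset.prod_eq_one (fun k _ => (hz k (i k) _).mpr rfl)
    rw [h1, mul_one]
  · intro r _ hr
    have : ∃ k, r k ≠ z k (i k) := by
      by_contra h
      push_neg at h
      exact hr (funext h)
    obtain ⟨k, hk⟩ := this
    have h0 : M k (i k) (r k) = 0 := by
      rcases h01 k (i k) (r k) with h | h
      · exact h
      · exact absurd ((hz k (i k) (r k)).mp h) hk
    rw [Finset.prod_eq_zero (Finset.mem_univ k) h0, mul_zero]
  · intro h; exact absurd (Finset.mem_univ _) h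

/-- **Identifiability of tensor block models.** If a tensor admits two block
decompositions with irreducible cores and membership factor matrices, then for
each mode `k` the two membership matrices induce the same partition, i.e.
`M'_k = M_k P_k` for some permutation matrix `P_k`. -/
theorem membership_identifiable_up_to_permutation
    {K : ℕ} {d R : Fin K → ℕ}
    (C C' : (∀ k, Fin (R k)) → ℝ)
    (M M' : ∀ k, Matrix (Fin (d k)) (Fin (R k)) ℝ)
    (hM : ∀ k, IsMembership (M k)) (hM' : ∀ k, IsMembership (M' k))
    (hC : IrreducibleCore C) (hC' : IrreducibleCore C')
    (heq : tmul C M = tmul C' M') :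
    ∀ k : Fin K, ∃ σ : Equiv.Perm (Fin (R k)),
      ∀ (i : Fin (d k)) (r : Fin (R k)), M' k i r = M k i (σ r) := by
  classical
  -- assignments
  have exz : ∀ k (i : Fin (d k)), ∃! r, M k i r = 1 := fun k => (hM k).2.1
  have exz' : ∀ k (i : Fin (d k)), ∃! r, M' k i r = 1 := fun k => (hM' k).2.1
  set z : ∀ k, Fin (d k) → Fin (R k) := fun k i => (exz k i).choose with hzdef
  set z' : ∀ k, Fin (d k) → Fin (R k) := fun k i => (exz' k i).choose with hz'def
  have hz : ∀ k (i : Fin (d k)) r, M k i r = 1 ↔ r = z k i := by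
    intro k i r
    constructor
    · intro h; exact (exz k i).choose_spec.2 r h
    · rintro rfl; exact (exz k i).choose_spec.1
  have hz' : ∀ k (i : Fin (d k)) r, M' k i r = 1 ↔ r = z' k i := by
    intro k i r
    constructor
    · intro h; exact (exz' k i).choose_spec.2 r h
    · rintro rfl; exact (exz' k i).choose_spec.1
  have zsurj : ∀ k r, ∃ i, z k i = r := by
    intro k r
    obtain ⟨i, hi⟩ := (hM k).2.2 r
    exact ⟨i, ((hz k i r).mp hi).symm⟩
  have z'surj : ∀ k r, ∃ i, z' k i = r := by
    intro k r
    obtain ⟨i, hi⟩ := (hM' k).2.2 r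
    exact ⟨i, ((hz' k i r).mp hi).symm⟩
  have tmulM : ∀ i, tmul C M i = C (fun k => z k (i k)) :=
    tmul_eq_assign C M z (fun k => (hM k).1) hz
  have tmulM' : ∀ i, tmul C' M' i = C' (fun k => z' k (i k)) :=
    tmul_eq_assign C' M' z' (fun k => (hM' k).1) hz'
  -- key: the `M'`-cluster of an index determines its `M`-cluster
  have key : ∀ k (i i' : Fin (d k)), z' k i = z' k i' → z k i = z k i' := by
    intro k i i' hzz
    by_contra hne
    obtain ⟨s, hs⟩ := hC k (z k i) (z k i') hne
    choose w hw using fun j => zsurj j (s j)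
    set u : ∀ j, Fin (d j) := Function.update w k i with hu
    set u' : ∀ j, Fin (d j) := Function.update w k i' with hu'
    have hzu : (fun j => z j (u j)) = Function.update s k (z k i) := by
      funext j
      rcases eq_or_ne j k with rfl | hjk
      · simp [hu]
      · simp [hu, Function.update_of_ne hjk, hw]
    have hzu' : (fun j => z j (u' j)) = Function.update s k (z k i') := by
      funext j
      rcases eq_or_ne j k with rfl | hjk
      · simp [hu']
      · simp [hu', Function.update_of_ne hjk, hw]
    have hz'uu' : (fun j => z' j (u j)) = (fun j => z' j (u' j)) := by
      funext j
      rcases eq_or_ne j k with rfl | hjk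
      · simp [hu, hu', hzz]
      · simp [hu, hu', Function.update_of_ne hjk]
    apply hs
    calc C (Function.update s k (z k i)) = tmul C M u := by rw [tmulM, hzu]
      _ = tmul C' M' u := by rw [heq]
      _ = tmul C' M' u' := by rw [tmulM', tmulM', hz'uu']
      _ = tmul C M u' := by rw [heq]
      _ = C (Function.update s k (z k i')) := by rw [tmulM, hzu']
  intro k
  choose p hp using z'surj k
  set g : Fin (R k) → Fin (R k) := fun r => z k (p r) with hg
  have hgz : ∀ i, g (z' k i) = z k i := by
    intro i
    exact key k (p (z' k i)) i (hp (z' k i))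
  have gsurj : Function.Surjective g := by
    intro r'
    obtain ⟨i, hi⟩ := zsurj k r'
    exact ⟨z' k i, by rw [hgz i, hi]⟩
  have gbij : Function.Bijective g := Finite.surjective_iff_bijective.mp gsurj
  refine ⟨Equiv.ofBijective g gbij, ?_⟩
  intro i r
  have hiff : M' k i r = 1 ↔ M k i (g r) = 1 := by
    rw [hz' k i r, hz k i (g r)]
    constructor
    · rintro rfl; exact hgz i
    · intro h
      exact gbij.1 (by rw [hgz i, h])
  rcases (hM' k).1 i r with h0 | h1
  · rw [h0]
    rcases (hM k).1 i (g r) with h | h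
    · rw [show (Equiv.ofBijective g gbij) r = g r from rfl, h]
    · exact absurd (hiff.mpr h) (by rw [h0]; norm_num)
  · rw [h1, show (Equiv.ofBijective g gbij) r = g r from rfl, hiff.mp h1]
end

section
/- Fix τ > 0 and a true core tensor C = (c_{r_1,…,r_K}) ∈ ℝ^{R_1×⋯×R_K} together with true membership matrices M_{k,true} ∈ {0,1}^{d_k×R_k}, and let δ^{(k)} = min_{r_k ≠ r_k'} max_{r_1,…,r_{k−1},r_{k+1},…,r_K} (c_{r_1,…,r_k,…,r_K} − c_{r_1,…,r_k',…,r_K})², with δ_min = min_k δ^{(k)} > 0. Let M̂_1,…,M̂_K be membership matrices such that all marginal cluster proportions of M_{k,true} and of M̂_k are at least τ for every k. Let D^{(k)} be the mode-k confusion matrix between M_{k,true} and M̂_k, with marginal proportions p^{(k)}_{r,true} (rows) and p̂^{(k)}_r (columns). Define μ_{r_1,…,r_K} = (Π_k p̂^{(k)}_{r_k})^{-1} [ C ×₁ (D^{(1)})ᵀ ×₂ ⋯ ×_K (D^{(K)})ᵀ ]_{r_1,…,r_K} and G(D^{(1)},…,D^{(K)}) = Σ_{r_1,…,r_K} (Π_k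 p̂^{(k)}_{r_k}) μ²_{r_1,…,r_K}, and let G_true = Σ_{r_1,…,r_K} (Π_k p^{(k)}_{r_k,true}) c²_{r_1,…,r_K}. If MCR(M_{k,true}, M̂_k) ≥ ε for some k ∈ [K] and some ε > 0, then G(D^{(1)},…,D^{(K)}) − G_true ≤ −(1/4) ε τ^{K−1} δ_min. -/
open scoped BigOperators

/-- Cluster proportions of a membership matrix: `p_r = (1/d) Σ_i 1{M_{ir}=1}`. -/
noncomputable def proportions {d R : ℕ} (M : Matrix (Fin d) (Fin R) ℝ) :
    Fin R → ℝ :=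
  fun r => (∑ i : Fin d, M i r) / (d : ℝ)

/-- Confusion matrix of two membership matrices on `[d]`:
`D_{r,r'} = (1/d) Σ_i 1{m_{i,r} = m̂_{i,r'} = 1}`. -/
noncomputable def confusion {d R : ℕ} (M Mhat : Matrix (Fin d) (Fin R) ℝ) :
    Matrix (Fin R) (Fin R) ℝ :=
  fun r r' => (∑ i : Fin d, M i r * Mhat i r') / (d : ℝ)

/-- Misclassification rate `MCR(M, M̂) = max_{r, a ≠ a'} min{D_{a,r}, D_{a',r}}`. -/
noncomputable def MCR {d R : ℕ} (M Mhat : Matrix (Fin d) (Fin R) ℝ) : ℝ :=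
  sSup {x : ℝ | ∃ r a a' : Fin R, a ≠ a' ∧
    x = min (confusion M Mhat a r) (confusion M Mhat a' r)}

lemma membership_nonneg {d R : ℕ} {M : Matrix (Fin d) (Fin R) ℝ}
    (hM : IsMembership M) (i : Fin d) (r : Fin R) : 0 ≤ M i r := by
  rcases hM.1 i r with h | h <;> rw [h] <;> norm_num

lemma membership_row_sum {d R : ℕ} {M : Matrix (Fin d) (Fin R) ℝ}
    (hM : IsMembership M) (i : Fin d) : ∑ r, M i r = 1 := by
  obtain ⟨r0, hr0, huniq⟩ := hM.2.1 i
  rw [Finset.sum_eq_single r0]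
  · exact hr0
  · intro r _ hne
    rcases hM.1 i r with h | h
    · exact h
    · exact absurd (huniq r h) hne
  · simp

lemma confusion_nonneg {d R : ℕ} {M Mhat : Matrix (Fin d) (Fin R) ℝ}
    (hM : IsMembership M) (hMhat : IsMembership Mhat) (r r' : Fin R) :
    0 ≤ confusion M Mhat r r' := by
  apply div_nonneg _ (Nat.cast_nonneg d)
  exact Finset.sum_nonneg fun i _ =>
    mul_nonneg (membership_nonneg hM i r) (membership_nonneg hMhat i r')

lemma confusion_row_sum {d R : ℕ} {M Mhat : Matrix (Fin d) (Fin R) ℝ}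
    (hMhat : IsMembership Mhat) (r : Fin R) :
    ∑ r', confusion M Mhat r r' = proportions M r := by
  unfold confusion proportions
  rw [← Finset.sum_div]
  congr 1
  rw [Finset.sum_comm]
  refine Finset.sum_congr rfl fun i _ => ?_
  rw [← Finset.mul_sum, membership_row_sum hMhat i, mul_one]

lemma confusion_col_sum {d R : ℕ} {M Mhat : Matrix (Fin d) (Fin R) ℝ}
    (hM : IsMembership M) (r' : Fin R) :
    ∑ r, confusion M Mhat r r' = proportions Mhat r' := by
  unfold confusion proportions
  rw [← Finset.sum_div]
  congr 1
  rw [Finset.sum_comm]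
  refine Finset.sum_congr rfl fun i _ => ?_
  rw [← Finset.sum_mul, membership_row_sum hM i, one_mul]


/-- **Non-negligible misclassification decreases the population objective
(Lemma 1).** With true core `C`, true memberships `M_{k,true}` and estimated
memberships `M̂_k`, all with marginal cluster proportions at least `τ`, let
`δ_min = min_k δ^{(k)} > 0` be the minimal gap between block means, let
`D^{(k)}` be the mode-`k` confusion matrices,
`μ_{r} = (Π_k p̂^{(k)}_{r_k})⁻¹ [C ×₁ D^{(1)ᵀ} ⋯ ×_K D^{(K)ᵀ}]_r`,
`G(D^{(1)},…,D^{(K)}) = Σ_r (Π_k p̂^{(k)}_{r_k}) μ_r²` and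
`G_true = Σ_r (Π_k p^{(k)}_{r_k,true}) c_r²`.  If `MCR(M_{k,true}, M̂_k) ≥ ε`
for some `k` and some `ε > 0`, then
`G(D^{(1)},…,D^{(K)}) - G_true ≤ -(1/4) ε τ^{K-1} δ_min`. -/
theorem population_objective_gap
    {K : ℕ} {d R : Fin K → ℕ}
    (C : (∀ k, Fin (R k)) → ℝ)
    (Mtrue Mhat : ∀ k, Matrix (Fin (d k)) (Fin (R k)) ℝ)
    (hMtrue : ∀ k, IsMembership (Mtrue k)) (hMhat : ∀ k, IsMembership (Mhat k))
    (τ : ℝ) (hτ : 0 < τ)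
    (hptrue : ∀ k r, τ ≤ proportions (Mtrue k) r)
    (hphat : ∀ k r, τ ≤ proportions (Mhat k) r)
    (δmin : ℝ) (hδ : 0 < δmin)
    (hgap : ∀ (k : Fin K) (r r' : Fin (R k)), r ≠ r' →
      ∃ s : ∀ j, Fin (R j),
        δmin ≤ (C (Function.update s k r) - C (Function.update s k r')) ^ 2)
    (D : ∀ k, Matrix (Fin (R k)) (Fin (R k)) ℝ)
    (hD : ∀ k, D k = confusion (Mtrue k) (Mhat k))
    (μblock : (∀ k, Fin (R k)) → ℝ)
    (hμ : ∀ r, μblock r =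
      (∏ k, proportions (Mhat k) (r k))⁻¹ *
        ∑ s : ∀ k, Fin (R k), C s * ∏ k, D k (s k) (r k))
    (G Gtrue : ℝ)
    (hG : G = ∑ r : ∀ k, Fin (R k),
      (∏ k, proportions (Mhat k) (r k)) * (μblock r) ^ 2)
    (hGtrue : Gtrue = ∑ r : ∀ k, Fin (R k),
      (∏ k, proportions (Mtrue k) (r k)) * (C r) ^ 2)
    (ε : ℝ) (hε : 0 < ε)
    (hmcr : ∃ k : Fin K, ε ≤ MCR (Mtrue k) (Mhat k)) :
    G - Gtrue ≤ -(1 / 4) * ε * τ ^ (K - 1) * δmin := by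
  classical
  obtain ⟨k, hk⟩ := hmcr
  -- extract a witness from the MCR bound
  set S : Set ℝ := {x : ℝ | ∃ r a a' : Fin (R k), a ≠ a' ∧
      x = min (confusion (Mtrue k) (Mhat k) a r) (confusion (Mtrue k) (Mhat k) a' r)}
    with hS
  have hSfin : S.Finite := by
    apply Set.Finite.subset (Set.finite_range
      (fun p : Fin (R k) × Fin (R k) × Fin (R k) =>
        min (confusion (Mtrue k) (Mhat k) p.2.1 p.1)
          (confusion (Mtrue k) (Mhat k) p.2.2 p.1)))
    rintro x ⟨r, a, a', -, rfl⟩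
    exact ⟨(r, a, a'), rfl⟩
  have hSne : S.Nonempty := by
    by_contra h
    rw [Set.not_nonempty_iff_eq_empty] at h
    rw [MCR, ← hS, h, Real.sSup_empty] at hk
    linarith
  obtain ⟨rstar, a, a', haa, hmin⟩ := hSne.csSup_mem hSfin
  rw [MCR, ← hS, hmin] at hk
  have hεa : ε ≤ D k a rstar := by rw [hD]; exact le_trans hk (min_le_left _ _)
  have hεa' : ε ≤ D k a' rstar := by rw [hD]; exact le_trans hk (min_le_right _ _)
  obtain ⟨s0, hs0⟩ := hgap k a a' haa
  -- basic facts about the confusion matrices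
  have hDnn : ∀ j (x y : Fin (R j)), 0 ≤ D j x y := by
    intro j x y; rw [hD]; exact confusion_nonneg (hMtrue j) (hMhat j) x y
  have hrowD : ∀ j (x : Fin (R j)), ∑ y, D j x y = proportions (Mtrue j) x := by
    intro j x; rw [hD]; exact confusion_row_sum (hMhat j) x
  have hcolD : ∀ j (y : Fin (R j)), ∑ x, D j x y = proportions (Mhat j) y := by
    intro j y; rw [hD]; exact confusion_col_sum (hMtrue j) y
  have hPhat_pos : ∀ r : ∀ j, Fin (R j), 0 < ∏ j, proportions (Mhat j) (r j) :=
    fun r => Finset.prod_pos fun j _ => lt_of_lt_of_le hτ (hphat j (r j))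
  -- sum-product identities
  have hsum_s : ∀ r : ∀ j, Fin (R j),
      ∑ s : ∀ j, Fin (R j), ∏ j, D j (s j) (r j) = ∏ j, proportions (Mhat j) (r j) := by
    intro r
    rw [← Fintype.prod_sum (fun j x => D j x (r j))]
    exact Finset.prod_congr rfl fun j _ => hcolD j (r j)
  have hsum_r : ∀ s : ∀ j, Fin (R j),
      ∑ r : ∀ j, Fin (R j), ∏ j, D j (s j) (r j) = ∏ j, proportions (Mtrue j) (s j) := by
    intro s
    rw [← Fintype.prod_sum (fun j x => D j (s j) x)]
    exact Finset.prod_congr rfl fun j _ => hrowD j (s j)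
  have hμ' : ∀ r : ∀ j, Fin (R j),
      ∑ s : ∀ j, Fin (R j), C s * ∏ j, D j (s j) (r j)
        = (∏ j, proportions (Mhat j) (r j)) * μblock r := by
    intro r
    rw [hμ r, ← mul_assoc, mul_inv_cancel₀ (ne_of_gt (hPhat_pos r)), one_mul]
  -- the variance identity
  have expand : ∀ r : ∀ j, Fin (R j),
      ∑ s : ∀ j, Fin (R j), (∏ j, D j (s j) (r j)) * (C s - μblock r) ^ 2
        = (∑ s : ∀ j, Fin (R j), (∏ j, D j (s j) (r j)) * (C s) ^ 2)
          - (∏ j, proportions (Mhat j) (r j)) * (μblock r) ^ 2 := by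
    intro r
    have h1 : ∑ s : ∀ j, Fin (R j), (∏ j, D j (s j) (r j)) * (C s - μblock r) ^ 2
        = ∑ s : ∀ j, Fin (R j), ((∏ j, D j (s j) (r j)) * (C s) ^ 2
            - 2 * μblock r * (C s * ∏ j, D j (s j) (r j))
            + (μblock r) ^ 2 * (∏ j, D j (s j) (r j))) :=
      Finset.sum_congr rfl fun s _ => by ring
    rw [h1, Finset.sum_add_distrib, Finset.sum_sub_distrib, ← Finset.mul_sum,
      ← Finset.mul_sum, hμ' r, hsum_s r]
    ring
  have hGtrue' : ∑ r : ∀ j, Fin (R j), ∑ s : ∀ j, Fin (R j),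
      (∏ j, D j (s j) (r j)) * (C s) ^ 2 = Gtrue := by
    rw [Finset.sum_comm, hGtrue]
    refine Finset.sum_congr rfl fun s _ => ?_
    rw [← Finset.sum_mul, hsum_r s]
  have key : Gtrue - G = ∑ r : ∀ j, Fin (R j), ∑ s : ∀ j, Fin (R j),
      (∏ j, D j (s j) (r j)) * (C s - μblock r) ^ 2 := by
    rw [Finset.sum_congr rfl (fun r _ => expand r), Finset.sum_sub_distrib, hGtrue', hG]
  -- the indicator-weight function
  set g : ∀ j, Fin (R j) → ℝ :=
    Function.update (fun j (x : Fin (R j)) => D j (s0 j) x) k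
      (fun x : Fin (R k) => if x = rstar then 1 else 0) with hgdef
  set sa : ∀ j, Fin (R j) := Function.update s0 k a with hsadef
  set sa' : ∀ j, Fin (R j) := Function.update s0 k a' with hsa'def
  have hsane : sa ≠ sa' := by
    intro h
    apply haa
    have := congrFun h k
    simpa [hsadef, hsa'def] using this
  -- pointwise lower bound
  have pointwise : ∀ r : ∀ j, Fin (R j),
      (∏ j, g j (r j)) * (ε * δmin / 2)
        ≤ ∑ s : ∀ j, Fin (R j), (∏ j, D j (s j) (r j)) * (C s - μblock r) ^ 2 := by
    intro r
    have hterm_nn : ∀ s : ∀ j, Fin (R j),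
        0 ≤ (∏ j, D j (s j) (r j)) * (C s - μblock r) ^ 2 :=
      fun s => mul_nonneg (Finset.prod_nonneg fun j _ => hDnn j _ _) (sq_nonneg _)
    by_cases hrk : r k = rstar
    · have hQnn : 0 ≤ ∏ j ∈ Finset.univ.erase k, D j (s0 j) (r j) :=
        Finset.prod_nonneg fun j _ => hDnn j _ _
      have hQ : ∏ j, g j (r j) = ∏ j ∈ Finset.univ.erase k, D j (s0 j) (r j) := by
        rw [← Finset.mul_prod_erase Finset.univ (fun j => g j (r j)) (Finset.mem_univ k)]
        have hgk : g k (r k) = 1 := by simp [hgdef, hrk]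
        rw [hgk, one_mul]
        refine Finset.prod_congr rfl fun j hj => ?_
        have hjk : j ≠ k := Finset.ne_of_mem_erase hj
        simp [hgdef, Function.update_of_ne hjk]
      have hsa_prod : ∏ j, D j (sa j) (r j)
          = D k a (r k) * ∏ j ∈ Finset.univ.erase k, D j (s0 j) (r j) := by
        rw [← Finset.mul_prod_erase Finset.univ (fun j => D j (sa j) (r j))
          (Finset.mem_univ k)]
        congr 1
        · simp [hsadef]
        · refine Finset.prod_congr rfl fun j hj => ?_
          have hjk : j ≠ k := Finset.ne_of_mem_erase hj
          simp [hsadef, Function.update_of_ne hjk]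
      have hsa'_prod : ∏ j, D j (sa' j) (r j)
          = D k a' (r k) * ∏ j ∈ Finset.univ.erase k, D j (s0 j) (r j) := by
        rw [← Finset.mul_prod_erase Finset.univ (fun j => D j (sa' j) (r j))
          (Finset.mem_univ k)]
        congr 1
        · simp [hsa'def]
        · refine Finset.prod_congr rfl fun j hj => ?_
          have hjk : j ≠ k := Finset.ne_of_mem_erase hj
          simp [hsa'def, Function.update_of_ne hjk]
      have htwo : (∏ j, D j (sa j) (r j)) * (C sa - μblock r) ^ 2
          + (∏ j, D j (sa' j) (r j)) * (C sa' - μblock r) ^ 2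
          ≤ ∑ s : ∀ j, Fin (R j), (∏ j, D j (s j) (r j)) * (C s - μblock r) ^ 2 := by
        have h := Finset.sum_le_sum_of_subset_of_nonneg
          (Finset.subset_univ ({sa, sa'} : Finset (∀ j, Fin (R j))))
          (fun s _ _ => hterm_nn s)
        rw [Finset.sum_pair hsane] at h
        exact h
      have hCsa : C sa = C (Function.update s0 k a) := by rw [hsadef]
      have hCsa' : C sa' = C (Function.update s0 k a') := by rw [hsa'def]
      have hvar : ε * δmin / 2
          ≤ D k a (r k) * (C sa - μblock r) ^ 2 + D k a' (r k) * (C sa' - μblock r) ^ 2 := by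
        rw [hrk]
        rw [hCsa, hCsa'] 
        set x := C (Function.update s0 k a)
        set y := C (Function.update s0 k a')
        set m := μblock r
        nlinarith [sq_nonneg (x - m), sq_nonneg (y - m), sq_nonneg (x + y - 2 * m),
          mul_nonneg (sub_nonneg.mpr hεa) (sq_nonneg (x - m)),
          mul_nonneg (sub_nonneg.mpr hεa') (sq_nonneg (y - m))]
      calc (∏ j, g j (r j)) * (ε * δmin / 2)
          = (∏ j ∈ Finset.univ.erase k, D j (s0 j) (r j)) * (ε * δmin / 2) := by rw [hQ]
        _ ≤ (∏ j ∈ Finset.univ.erase k, D j (s0 j) (r j)) *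
            (D k a (r k) * (C sa - μblock r) ^ 2 + D k a' (r k) * (C sa' - μblock r) ^ 2) :=
            mul_le_mul_of_nonneg_left hvar hQnn
        _ = (∏ j, D j (sa j) (r j)) * (C sa - μblock r) ^ 2
            + (∏ j, D j (sa' j) (r j)) * (C sa' - μblock r) ^ 2 := by
            rw [hsa_prod, hsa'_prod]; ring
        _ ≤ _ := htwo
    · have hzero : ∏ j, g j (r j) = 0 := by
        apply Finset.prod_eq_zero (Finset.mem_univ k)
        simp [hgdef, hrk]
      rw [hzero, zero_mul]
      exact Finset.sum_nonneg fun s _ => hterm_nn s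
  -- total mass of the weight
  have total : ∑ r : ∀ j, Fin (R j), ∏ j, g j (r j)
      = ∏ j ∈ Finset.univ.erase k, proportions (Mtrue j) (s0 j) := by
    rw [← Fintype.prod_sum g]
    rw [← Finset.mul_prod_erase Finset.univ (fun j => ∑ x, g j x) (Finset.mem_univ k)]
    have h1 : ∑ x, g k x = 1 := by simp [hgdef]
    rw [h1, one_mul]
    refine Finset.prod_congr rfl fun j hj => ?_
    have hjk : j ≠ k := Finset.ne_of_mem_erase hj
    have : g j = fun x => D j (s0 j) x := by rw [hgdef]; exact Function.update_of_ne hjk _ _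
    rw [this]
    exact hrowD j (s0 j)
  have lower : (∏ j ∈ Finset.univ.erase k, proportions (Mtrue j) (s0 j)) * (ε * δmin / 2)
      ≤ Gtrue - G := by
    rw [key, ← total, Finset.sum_mul]
    exact Finset.sum_le_sum fun r _ => pointwise r
  -- bound the product of proportions from below by τ^(K-1)
  have hτpow : τ ^ (K - 1) ≤ ∏ j ∈ Finset.univ.erase k, proportions (Mtrue j) (s0 j) := by
    have hc : (Finset.univ.erase k).card = K - 1 := by
      rw [Finset.card_erase_of_mem (Finset.mem_univ k), Finset.card_univ, Fintype.card_fin]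
    calc τ ^ (K - 1) = ∏ _j ∈ Finset.univ.erase k, τ := by rw [Finset.prod_const, hc]
      _ ≤ _ := Finset.prod_le_prod (fun _ _ => le_of_lt hτ) (fun j _ => hptrue j (s0 j))
  have hτpow_pos : 0 < τ ^ (K - 1) := pow_pos hτ _
  have final : τ ^ (K - 1) * (ε * δmin / 2) ≤ Gtrue - G := by
    refine le_trans ?_ lower
    exact mul_le_mul_of_nonneg_right hτpow (by positivity)
  nlinarith [mul_pos (mul_pos hε hτpow_pos) hδ]
end
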